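/- arXiv:0907.2960 — 9 statements merged into one kernel-verified Lean document; each statement's English description precedes it below -/
import Mathlib

section
/- Let X be a compact topological space, Y a Hausdorff topological space, D ⊆ X with closure D̄ and ∂D := D̄ \ D. Let f : D̄ → Y be continuous with f(D) open in Y. If E is a connected subset of Y disjoint from f(∂D), then either E ⊆ f(D) or f(D̄) ∩ E = ∅. -/
open Set

theorem image_inter_subset_image_of_disjoint_image_diff {X Y : Type*} {f : X → Y}
    {s t : Set X} {E : Set Y} (hdisj : Disjoint E (f '' (t \ s))) : f '' t ∩ E ⊆ f '' s := by
  rintro _ ⟨⟨x, hxt, rfl⟩, hxE⟩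
  by_cases hxs : x ∈ s
  · exact mem_image_of_mem f hxs
  · exact absurd rfl (hdisj.ne_of_mem hxE (mem_image_of_mem f ⟨hxt, hxs⟩))

theorem IsPreconnected.subset_or_inter_eq_empty {Y : Type*} [TopologicalSpace Y]
    {E U C : Set Y} (hE : IsPreconnected E) (hU : IsOpen U) (hC : IsClosed C) (hUC : U ⊆ C)
    (hCE : C ∩ E ⊆ U) : E ⊆ U ∨ C ∩ E = ∅ := by
  by_cases hEU : (E ∩ U).Nonempty
  · have hclosure : closure U ∩ E ⊆ U :=
      (inter_subset_inter_left E (closure_minimal hUC hC)).trans hCE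
    exact Or.inl (hE.subset_of_closure_inter_subset hU hEU hclosure)
  · exact Or.inr (eq_empty_of_forall_notMem fun y hy => hEU ⟨y, hy.2, hCE hy⟩)

/-- Dichotomy Principle: X compact, Y Hausdorff, D ⊆ X, f : D̄ → Y continuous
with f(D) open; a connected E disjoint from f(∂D) satisfies E ⊆ f(D) or f(D̄) ∩ E = ∅. -/
theorem dichotomy_principle {X Y : Type*} [TopologicalSpace X] [CompactSpace X]
    [TopologicalSpace Y] [T2Space Y] (D : Set X) (f : X → Y)
    (hf : ContinuousOn f (closure D)) (hopen : IsOpen (f '' D))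
    (E : Set Y) (hE : IsPreconnected E)
    (hdisj : Disjoint E (f '' (closure D \ D))) :
    E ⊆ f '' D ∨ (f '' closure D) ∩ E = ∅ := by
  have hclosed : IsClosed (f '' closure D) :=
    (isClosed_closure.isCompact.image_of_continuousOn hf).isClosed
  exact hE.subset_or_inter_eq_empty hopen hclosed (image_mono subset_closure)
    (image_inter_subset_image_of_disjoint_image_diff hdisj)
end

section
/- Let X be a compact topological space, Y a Hausdorff topological space, D ⊆ X with ∂D := D̄ \ D, and f : D̄ → Y continuous with f(D) open. Then f(D̄) is disjoint from the union, over all y ∉ f(D̄), of the connected component E_y of y in Y \ f(∂D). -/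
/-! A component `C` of `Y \ f(∂D)` meeting `f(D̄)` meets it only inside the open set `f(D)`;
since `f(D̄)` is compact, hence closed, the closure of `f(D)` meets `C` only inside `f(D)` too,
so connectedness forces `C ⊆ f(D)`. A component through a point outside `f(D̄)` therefore
cannot meet `f(D̄)`. -/

open Set

theorem IsPreconnected.subset_image_of_disjoint_image_closure_diff {X Y : Type*}
    [TopologicalSpace X] [TopologicalSpace Y] [T2Space Y] {D : Set X} {f : X → Y}
    (hcpt : IsCompact (closure D)) (hf : ContinuousOn f (closure D)) (hopen : IsOpen (f '' D))
    {C : Set Y} (hC : IsPreconnected C) (hCD : Disjoint C (f '' (closure D \ D)))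
    (hmeet : (C ∩ f '' closure D).Nonempty) : C ⊆ f '' D := by
  have hclosed : IsClosed (f '' closure D) := (hcpt.image_of_continuousOn hf).isClosed
  have hinter : C ∩ f '' closure D ⊆ f '' D := by
    rintro _ ⟨hxC, a, ha, rfl⟩
    by_contra haD
    exact hCD.notMem_of_mem_left hxC ⟨a, ⟨ha, fun h => haD ⟨a, h, rfl⟩⟩, rfl⟩
  refine hC.subset_of_closure_inter_subset hopen ?_ ?_
  · obtain ⟨z, hz⟩ := hmeet
    exact ⟨z, hz.1, hinter hz⟩
  · rintro x ⟨hxcl, hxC⟩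
    exact hinter ⟨hxC, closure_minimal (image_mono subset_closure) hclosed hxcl⟩

/-- Containment Principle: f(D̄) is disjoint from the union, over y ∉ f(D̄),
of the connected component of y in Y \ f(∂D). -/
theorem containment_principle {X Y : Type*} [TopologicalSpace X] [CompactSpace X]
    [TopologicalSpace Y] [T2Space Y] (D : Set X) (f : X → Y)
    (hf : ContinuousOn f (closure D)) (hopen : IsOpen (f '' D)) :
    Disjoint (f '' closure D)
      (⋃ y ∈ (f '' closure D)ᶜ, connectedComponentIn (f '' (closure D \ D))ᶜ y) := by
  simp only [disjoint_iUnion_right]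
  intro y hy
  rw [disjoint_comm, disjoint_iff_inter_eq_empty, ← not_nonempty_iff_eq_empty]
  intro hmeet
  have hyW : y ∈ (f '' (closure D \ D))ᶜ := fun h => hy (image_mono sdiff_subset h)
  have hsub := isPreconnected_connectedComponentIn.subset_image_of_disjoint_image_closure_diff
    isClosed_closure.isCompact hf hopen
    (subset_compl_iff_disjoint_right.mp (connectedComponentIn_subset _ y)) hmeet
  exact hy (image_mono subset_closure (hsub (mem_connectedComponentIn hyW)))
end

section
/- Let X be compact, Y Hausdorff, D ⊆ X nonempty, ∂D := D̄ \ D, and f : D̄ → Y continuous with f(D) open. If E is a connected subset of Y with f(D) ⊆ E and E ∩ f(∂D) = ∅, then f(D) = E. -/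
/-!
Compactness of `closure D` makes `f '' closure D = closure (f '' D)`, so the only limit points
of the open set `f '' D` outside it lie in `f '' (closure D \ D)`. A connected `E` avoiding
those points and meeting `f '' D` is therefore contained in it.
-/

open Set

theorem image_closure_inter_subset_image {X Y : Type*} [TopologicalSpace X] {D : Set X}
    {f : X → Y} {E : Set Y}
    (hdisj : E ∩ f '' (closure D \ D) = ∅) : f '' closure D ∩ E ⊆ f '' D := by
  rintro _ ⟨⟨x, hx, rfl⟩, hy⟩
  by_contra hxD
  have hx_boundary : x ∈ closure D \ D := ⟨hx, fun h => hxD ⟨x, h, rfl⟩⟩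
  exact (eq_empty_iff_forall_notMem.1 hdisj) _ ⟨hy, x, hx_boundary, rfl⟩

theorem subset_image_or_image_closure_inter_eq_empty {X Y : Type*} [TopologicalSpace X]
    [TopologicalSpace Y] [T2Space Y] {D : Set X}
    (hD : IsCompact (closure D)) {f : X → Y} (hf : ContinuousOn f (closure D))
    (hopen : IsOpen (f '' D)) {E : Set Y} (hE : IsPreconnected E)
    (hdisj : E ∩ f '' (closure D \ D) = ∅) :
    E ⊆ f '' D ∨ f '' closure D ∩ E = ∅ := by
  have hlimit := image_closure_inter_subset_image hdisj
  rcases (E ∩ f '' D).eq_empty_or_nonempty with hmiss | hmeet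
  · exact Or.inr <| subset_empty_iff.1 fun y hy => hmiss.subset ⟨hy.2, hlimit hy⟩
  · refine Or.inl <| hE.subset_of_closure_inter_subset hopen hmeet ?_
    rwa [← image_closure_of_isCompact hD hf]

/-- QJFP part (I): if f(D) ⊆ E, E connected and disjoint from f(∂D), then f(D) = E. -/
theorem qjfp_I {X Y : Type*} [TopologicalSpace X] [CompactSpace X]
    [TopologicalSpace Y] [T2Space Y] (D : Set X) (hD : D.Nonempty) (f : X → Y)
    (hf : ContinuousOn f (closure D)) (hopen : IsOpen (f '' D))
    (E : Set Y) (hE : IsConnected E)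
    (hsub : f '' D ⊆ E) (hdisj : E ∩ f '' (closure D \ D) = ∅) :
    f '' D = E := by
  rcases subset_image_or_image_closure_inter_eq_empty isClosed_closure.isCompact hf hopen
      hE.isPreconnected hdisj with hcover | hmiss
  · exact hsub.antisymm hcover
  · obtain ⟨x, hx⟩ := hD
    have hmeet : (f '' closure D ∩ E).Nonempty :=
      ⟨f x, ⟨x, subset_closure hx, rfl⟩, hsub ⟨x, hx, rfl⟩⟩
    exact absurd hmiss hmeet.ne_empty
end

section
/- Let X be compact, Y Hausdorff, D ⊆ X nonempty, ∂D := D̄ \ D, and f : D̄ → Y continuous with f(D) open. Suppose E, F ⊆ Y with E connected, E ∩ f(∂D) = ∅, (Y \ f(∂D)) ⊆ E ∪ F, f(D) ∩ F = ∅, and f(∂D) ⊆ closure(F). Then f(D) = E, and moreover f(D) ∩ f(∂D) = ∅. -/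
/-!
Since `f(D)` is open and misses `F`, it also misses `closure F ⊇ f(∂D)`; the cover
`Y \ f(∂D) ⊆ E ∪ F` then forces `f(D) ⊆ E`. Conversely `f(D̄) = f(D) ∪ f(∂D)` is compact, hence
closed, so inside `E` (which avoids `f(∂D)`) the open set `f(D)` is also relatively closed;
as it meets the connected set `E`, it contains all of `E`.
-/

open Set

section

variable {X Y : Type*} [TopologicalSpace X]

theorem image_closure_eq_image_union_image_closure_diff (f : X → Y) (D : Set X) :
    f '' closure D = f '' D ∪ f '' (closure D \ D) := by
  rw [← image_union, union_sdiff_cancel subset_closure]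

theorem closure_image_subset_image_union_image_closure_diff [CompactSpace X]
    [TopologicalSpace Y] [T2Space Y] {f : X → Y} {D : Set X} (hf : ContinuousOn f (closure D)) :
    closure (f '' D) ⊆ f '' D ∪ f '' (closure D \ D) := by
  have hclosed : IsClosed (f '' closure D) :=
    (isClosed_closure.isCompact.image_of_continuousOn hf).isClosed
  rw [← image_closure_eq_image_union_image_closure_diff]
  exact closure_minimal (image_mono subset_closure) hclosed

end

/-- QJFP part (II). -/
theorem qjfp_II {X Y : Type*} [TopologicalSpace X] [CompactSpace X]
    [TopologicalSpace Y] [T2Space Y] (D : Set X) (hD : D.Nonempty) (f : X → Y)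
    (hf : ContinuousOn f (closure D)) (hopen : IsOpen (f '' D))
    (E F : Set Y) (hE : IsConnected E)
    (hEdisj : E ∩ f '' (closure D \ D) = ∅)
    (hcover : (f '' (closure D \ D))ᶜ ⊆ E ∪ F)
    (hFdisj : f '' D ∩ F = ∅)
    (hFcl : f '' (closure D \ D) ⊆ closure F) :
    f '' D = E ∧ f '' D ∩ f '' (closure D \ D) = ∅ := by
  have hDF : Disjoint (f '' D) F := disjoint_iff_inter_eq_empty.2 hFdisj
  have hboundary : Disjoint (f '' D) (f '' (closure D \ D)) :=
    (hDF.closure_right hopen).mono_right hFcl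
  have hsub : f '' D ⊆ E := fun y hy =>
    (hcover (disjoint_left.1 hboundary hy)).resolve_right (disjoint_left.1 hDF hy)
  have hrelclosed : closure (f '' D) ∩ E ⊆ f '' D := fun y ⟨hycl, hyE⟩ =>
    (closure_image_subset_image_union_image_closure_diff hf hycl).resolve_right
      fun hyB => eq_empty_iff_forall_notMem.1 hEdisj y ⟨hyE, hyB⟩
  have hmeet : (E ∩ f '' D).Nonempty :=
    let ⟨x, hx⟩ := hD
    ⟨f x, hsub (mem_image_of_mem f hx), mem_image_of_mem f hx⟩
  exact ⟨hsub.antisymm (hE.isPreconnected.subset_of_closure_inter_subset hopen hmeet hrelclosed),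
    disjoint_iff_inter_eq_empty.1 hboundary⟩
end

section
/- Let X be a compact topological space, D ⊆ X, ∂D := D̄ \ D, and f : D̄ → ℂ a continuous map into ℂ (viewed inside the Riemann sphere) with f(D) open. Then f(D̄) is disjoint from the unbounded connected component of ℂ \ f(∂D). -/
/-!
A component `E` of `ℂ \ f(∂D)` meets the compact set `K = f(D̄)` only inside the open set
`f(D) ⊆ K`, so it splits into the relatively open pieces `E ∩ f(D)` and `E \ K`. If `E` meets `K`,
connectedness gives `E ⊆ f(D) ⊆ K`, and `E` is bounded.
-/

open Set

theorem IsPreconnected.subset_of_inter_subset_of_isOpen_of_isClosed {α : Type*}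
    [TopologicalSpace α] {E U K : Set α} (hE : IsPreconnected E) (hU : IsOpen U)
    (hK : IsClosed K) (hUK : U ⊆ K) (hEK : E ∩ K ⊆ U) (hne : (E ∩ K).Nonempty) : E ⊆ U := by
  have hcover : E ⊆ U ∪ Kᶜ := fun x hx => (em (x ∈ K)).imp (fun hxK => hEK ⟨hx, hxK⟩) id
  have hdisj : Disjoint U Kᶜ := disjoint_compl_right_iff_subset.mpr hUK
  obtain ⟨x, hxE, hxK⟩ := hne
  exact hE.subset_left_of_subset_union hU hK.isOpen_compl hdisj hcover
    ⟨x, hxE, hEK ⟨hxE, hxK⟩⟩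

theorem Set.image_sdiff_image_sdiff_subset {α β : Type*} (f : α → β) (s t : Set α) :
    f '' t \ f '' (t \ s) ⊆ f '' s := by
  rw [sdiff_subset_iff, ← image_union, sdiff_union_self]
  exact image_mono subset_union_left

theorem flight_confinement_general {X : Type*} [TopologicalSpace X] [CompactSpace X]
    (D : Set X) (f : X → ℂ)
    (hf : ContinuousOn f (closure D)) (hopen : IsOpen (f '' D))
    (w : ℂ)
    (hub : ¬ Bornology.IsBounded (connectedComponentIn (f '' (closure D \ D))ᶜ w)) :
    Disjoint (f '' closure D) (connectedComponentIn (f '' (closure D \ D))ᶜ w) := by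
  set E := connectedComponentIn (f '' (closure D \ D))ᶜ w
  have hK : IsCompact (f '' closure D) := isClosed_closure.isCompact.image_of_continuousOn hf
  have hEK : E ∩ f '' closure D ⊆ f '' D := fun x ⟨hxE, hxK⟩ =>
    image_sdiff_image_sdiff_subset f D (closure D) ⟨hxK, connectedComponentIn_subset _ _ hxE⟩
  rw [disjoint_iff_inter_eq_empty, inter_comm, ← not_nonempty_iff_eq_empty]
  intro hne
  have hED : E ⊆ f '' D :=
    isPreconnected_connectedComponentIn.subset_of_inter_subset_of_isOpen_of_isClosed
      hopen hK.isClosed (image_mono subset_closure) hEK hne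
  exact hub (hK.isBounded.subset (hED.trans (image_mono subset_closure)))

/-- Flight-Confinement Principle: f(D̄) is disjoint from any unbounded connected
component of ℂ \ f(∂D). -/
theorem flight_confinement {X : Type*} [TopologicalSpace X] [CompactSpace X]
    (D : Set X) (f : X → ℂ)
    (hf : ContinuousOn f (closure D)) (hopen : IsOpen (f '' D))
    (w : ℂ) (hw : w ∈ (f '' (closure D \ D))ᶜ)
    (hub : ¬ Bornology.IsBounded (connectedComponentIn (f '' (closure D \ D))ᶜ w)) :
    Disjoint (f '' closure D) (connectedComponentIn (f '' (closure D \ D))ᶜ w) :=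
  flight_confinement_general D f hf hopen w hub
end

section
/- Let X be a compact topological space, D ⊆ X, ∂D := D̄ \ D, and f : D̄ → ℂ continuous with f(D) open in ℂ. Then sup_{z ∈ D̄} |f(z)| = sup_{z ∈ ∂D} |f(z)|. -/
/-!
`‖f‖` attains its maximum on the compact set `closure D`. The maximiser cannot lie in `D`:
`f '' D` is open, and an open set in a real normed space contains, near each of its points,
points of larger norm. Hence it lies in `closure D \ D`, and both suprema equal its value.
-/

open Set Metric

theorem IsOpen.exists_norm_gt_norm {E : Type*} [NormedAddCommGroup E] [NormedSpace ℝ E]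
    [Nontrivial E] {U : Set E} (hU : IsOpen U) {c : E} (hc : c ∈ U) :
    ∃ w ∈ U, ‖c‖ < ‖w‖ := by
  by_contra! hle
  have hU_sub : U ⊆ closedBall 0 ‖c‖ := fun w hw => mem_closedBall_zero_iff.2 (hle w hw)
  have hc_ball : c ∈ ball (0 : E) ‖c‖ := by
    rw [← interior_closedBall']
    exact interior_maximal hU_sub hU hc
  simp at hc_ball

theorem notMem_of_isMaxOn_norm_of_isOpen_image {X E : Type*} [NormedAddCommGroup E]
    [NormedSpace ℝ E] [Nontrivial E] {f : X → E} {D s : Set X} {x : X}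
    (hopen : IsOpen (f '' D)) (hDs : D ⊆ s) (hmax : IsMaxOn (fun z => ‖f z‖) s x) : x ∉ D := by
  intro hxD
  obtain ⟨_, ⟨y, hyD, rfl⟩, hlt⟩ := hopen.exists_norm_gt_norm (mem_image_of_mem f hxD)
  exact (hmax (hDs hyD)).not_gt hlt

theorem IsMaxOn.csSup_image_eq_of_subset {α β : Type*} [ConditionallyCompleteLattice β]
    {g : α → β} {K S : Set α} {x : α} (hmax : IsMaxOn g K x) (hxS : x ∈ S) (hSK : S ⊆ K) :
    sSup (g '' K) = sSup (g '' S) := by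
  have hgreatest : ∀ T ⊆ K, x ∈ T → IsGreatest (g '' T) (g x) := fun T hTK hxT =>
    ⟨mem_image_of_mem g hxT, forall_mem_image.2 fun y hy => hmax (hTK hy)⟩
  rw [(hgreatest K subset_rfl (hSK hxS)).csSup_eq, (hgreatest S hSK hxS).csSup_eq]

theorem fin_max_mp_general {X : Type*} [TopologicalSpace X] [CompactSpace X]
    (D : Set X) (f : X → ℂ)
    (hf : ContinuousOn f (closure D)) (hopen : IsOpen (f '' D)) :
    sSup ((fun z => ‖f z‖) '' closure D)
      = sSup ((fun z => ‖f z‖) '' (closure D \ D)) := by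
  rcases D.eq_empty_or_nonempty with rfl | hD
  · simp
  obtain ⟨x, hx, hmax⟩ :=
    isClosed_closure.isCompact.exists_isMaxOn hD.closure hf.norm
  have hx_bd : x ∈ closure D \ D :=
    ⟨hx, notMem_of_isMaxOn_norm_of_isOpen_image hopen subset_closure hmax⟩
  exact hmax.csSup_image_eq_of_subset hx_bd sdiff_subset

/-- Finite maximum modulus principle: sup of |f| on D̄ equals sup of |f| on ∂D. -/
theorem fin_max_mp {X : Type*} [TopologicalSpace X] [CompactSpace X]
    (D : Set X) (f : X → ℂ)
    (hf : ContinuousOn f (closure D)) (hopen : IsOpen (f '' D))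
    (hbd : (closure D \ D).Nonempty) :
    sSup ((fun z => ‖f z‖) '' closure D)
      = sSup ((fun z => ‖f z‖) '' (closure D \ D)) :=
  fin_max_mp_general D f hf hopen
end

section
/- Let X be a compact topological space, D ⊆ X, ∂D := D̄ \ D, f : D̄ → ℂ continuous with f(D) open in ℂ, and let m := inf_{z ∈ ∂D} |f(z)|. Then either the open disc {w : |w| < m} is contained in f(D), or |f(z)| ≥ m for all z ∈ D̄. -/
/-! A set `E` that misses `f(∂D)` is covered by the open set `f(D)` and the complement of the
compact set `f(D̄)`; these are disjoint, so a connected `E` lies in one of them. For the disc of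
radius `m` the second alternative means `|f| ≥ m` on `D̄`. -/

open Set

theorem IsPreconnected.subset_image_or_disjoint_image_closure {X Y : Type*}
    [TopologicalSpace X] [TopologicalSpace Y] {D : Set X} {f : X → Y} {E : Set Y}
    (hE : IsPreconnected E) (hopen : IsOpen (f '' D)) (hclosed : IsClosed (f '' closure D))
    (hboundary : Disjoint E (f '' (closure D \ D))) :
    E ⊆ f '' D ∨ Disjoint E (f '' closure D) := by
  have hcover : E ⊆ f '' D ∪ (f '' closure D)ᶜ := by
    intro w hw
    by_cases h : w ∈ f '' closure D
    · obtain ⟨z, hz, rfl⟩ := h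
      by_cases hzD : z ∈ D
      · exact Or.inl (mem_image_of_mem f hzD)
      · exact (hboundary.notMem_of_mem_left hw (mem_image_of_mem f ⟨hz, hzD⟩)).elim
    · exact Or.inr h
  have hsep : Disjoint (f '' D) (f '' closure D)ᶜ :=
    (image_mono subset_closure).disjoint_compl_right
  exact (hE.subset_or_subset hopen hclosed.isOpen_compl hsep hcover).imp id
    subset_compl_iff_disjoint_right.mp

/-- Minimum modulus dichotomy. -/
theorem min_modulus_dichotomy {X : Type*} [TopologicalSpace X] [CompactSpace X]
    (D : Set X) (f : X → ℂ)
    (hf : ContinuousOn f (closure D)) (hopen : IsOpen (f '' D))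
    (m : ℝ) (hm : m = sInf ((fun z => ‖f z‖) '' (closure D \ D))) :
    {w : ℂ | ‖w‖ < m} ⊆ f '' D ∨
      ∀ z ∈ closure D, m ≤ ‖f z‖ := by
  have hbound : ∀ z ∈ closure D \ D, m ≤ ‖f z‖ := fun z hz =>
    hm ▸ csInf_le ⟨0, by rintro _ ⟨y, -, rfl⟩; exact norm_nonneg _⟩ (mem_image_of_mem _ hz)
  have hboundary : Disjoint {w : ℂ | ‖w‖ < m} (f '' (closure D \ D)) := by
    rw [disjoint_right]
    rintro _ ⟨z, hz, rfl⟩ hlt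
    exact (hbound z hz).not_gt hlt
  have hdisc : IsPreconnected {w : ℂ | ‖w‖ < m} :=
    ball_zero_eq (E := ℂ) m ▸ (convex_ball 0 m).isPreconnected
  have hclosed : IsClosed (f '' closure D) :=
    (isClosed_closure.isCompact.image_of_continuousOn hf).isClosed
  refine (hdisc.subset_image_or_disjoint_image_closure hopen hclosed hboundary).imp id
    fun h z hz => ?_
  exact not_lt.mp fun hlt => h.notMem_of_mem_left hlt (mem_image_of_mem f hz)
end

section
/- Let X be a compact topological space, D ⊆ X, ∂D := D̄ \ D, f : D̄ → ℂ continuous with f(D) open in ℂ, and let M := sup_{z ∈ ∂D} |f(z)| < ∞. Then either every w ∈ ℂ with |w| > M belongs to f(D), or |f(z)| ≤ M for all z ∈ D̄. -/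
/-!
Since `closure D` is compact, `f '' closure D` is closed, so the connected set
`E = {w | M < ‖w‖}` is covered by the disjoint open sets `f '' D` and `(f '' closure D)ᶜ`:
a point of `E` hit by `f` on `closure D` is hit on `D`, because `‖f‖ ≤ M` on `closure D \ D`.
Hence `E` lies in one of them, which are the two alternatives.
-/

open Metric Set

theorem isPreconnected_compl_closedBall {E : Type*} [NormedAddCommGroup E] [NormedSpace ℝ E]
    (h : 1 < Module.rank ℝ E) (x : E) (r : ℝ) : IsPreconnected (closedBall x r)ᶜ := by
  rcases lt_or_ge r 0 with hr | hr
  · simpa [closedBall_eq_empty.2 hr] using isPreconnected_univ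
  have himage : (fun p : ℝ × E => x + p.1 • p.2) '' (Ioi r ×ˢ sphere 0 1) = (closedBall x r)ᶜ := by
    ext w
    constructor
    · rintro ⟨⟨t, v⟩, ⟨ht, hv⟩, rfl⟩
      simp_all [norm_smul, abs_of_pos (hr.trans_lt ht)]
    · intro hw
      have hw' : r < ‖w - x‖ := by simpa [dist_eq_norm] using hw
      have hne : ‖w - x‖ ≠ 0 := (hr.trans_lt hw').ne'
      refine ⟨(‖w - x‖, ‖w - x‖⁻¹ • (w - x)), ⟨hw', ?_⟩, ?_⟩
      · simp [norm_smul, hne]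
      · simp [smul_smul, hne]
  rw [← himage]
  exact (isPreconnected_Ioi.prod (isPreconnected_sphere h 0 1)).image _
    (continuous_const.add (continuous_fst.smul continuous_snd)).continuousOn

theorem image_subset_or_disjoint_of_isPreconnected {X Y : Type*} [TopologicalSpace X]
    [CompactSpace X] [TopologicalSpace Y] [T2Space Y] {D : Set X} {f : X → Y}
    (hf : ContinuousOn f (closure D)) (hopen : IsOpen (f '' D)) {E : Set Y}
    (hE : IsPreconnected E) (hbdry : Disjoint E (f '' (closure D \ D))) :
    E ⊆ f '' D ∨ Disjoint E (f '' closure D) := by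
  have hclosed : IsClosed (f '' closure D) :=
    (isClosed_closure.isCompact.image_of_continuousOn hf).isClosed
  have hcover : E ⊆ f '' D ∪ (f '' closure D)ᶜ := by
    rintro w hw
    by_cases hw' : w ∈ f '' closure D
    · obtain ⟨z, hz, rfl⟩ := hw'
      by_cases hzD : z ∈ D
      · exact Or.inl (mem_image_of_mem f hzD)
      · exact absurd (mem_image_of_mem f (mem_sdiff_of_mem hz hzD)) (disjoint_left.1 hbdry hw)
    · exact Or.inr hw'
  have hdisj : Disjoint (f '' D) (f '' closure D)ᶜ :=
    disjoint_compl_right_iff_subset.2 (image_mono subset_closure)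
  exact (hE.subset_or_subset hopen hclosed.isOpen_compl hdisj hcover).imp_right
    subset_compl_iff_disjoint_right.1

/-- Maximum modulus dichotomy. -/
theorem max_modulus_dichotomy {X : Type*} [TopologicalSpace X] [CompactSpace X]
    (D : Set X) (f : X → ℂ)
    (hf : ContinuousOn f (closure D)) (hopen : IsOpen (f '' D))
    (M : ℝ) (hM : M = sSup ((fun z => ‖f z‖) '' (closure D \ D))) :
    (∀ w : ℂ, M < ‖w‖ → w ∈ f '' D) ∨
      ∀ z ∈ closure D, ‖f z‖ ≤ M := by
  have hbdd : BddAbove ((fun z => ‖f z‖) '' (closure D \ D)) :=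
    (isClosed_closure.isCompact.image_of_continuousOn hf.norm).bddAbove.mono
      (image_mono sdiff_subset)
  have hbdry : ∀ z ∈ closure D \ D, ‖f z‖ ≤ M := fun z hz =>
    hM ▸ le_csSup hbdd (mem_image_of_mem _ hz)
  have hE : IsPreconnected {w : ℂ | M < ‖w‖} := by
    convert isPreconnected_compl_closedBall (by simp [Complex.rank_real_complex]) (0 : ℂ) M
    ext w
    simp
  have hEbdry : Disjoint {w : ℂ | M < ‖w‖} (f '' (closure D \ D)) := by
    rw [disjoint_right]
    rintro _ ⟨z, hz, rfl⟩
    exact (hbdry z hz).not_gt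
  rcases image_subset_or_disjoint_of_isPreconnected hf hopen hE hEbdry with hsub | hdisj
  · exact Or.inl fun w hw => hsub hw
  · refine Or.inr fun z hz => not_lt.1 fun hlt => ?_
    exact disjoint_left.1 hdisj hlt (mem_image_of_mem f hz)
end

section
/- For 1 < p < 2 and z ∈ ℂ with 0 < Re z < π/2 and Im z > 0, the series f(z) = Σ_{k≥0} [(kπ + z)^{-p} − (kπ + π − z)^{-p}] converges absolutely, and Im f(z) < 0. -/
/-!
Since `kπ + z` lies in the open first quadrant and `kπ + π - z` in the open fourth one, the argument
of `w ^ (-p)` is `-p · arg w` with `|p · arg w| < π`, so every term of the series has negative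
imaginary part. Both bases have real part at least a constant times `k + 1`, so the terms are
dominated by `(k + 1) ^ (-p)`, which is summable for `p > 1`.
-/

open Complex Real

theorem Complex.im_cpow_neg_ofReal_neg {p : ℝ} (hp0 : 0 < p) (hp2 : p < 2) {w : ℂ}
    (hre : 0 < w.re) (him : 0 < w.im) : (w ^ (-(p : ℂ))).im < 0 := by
  have hw : w ≠ 0 := fun h => by simp [h] at him
  have harg0 : 0 < arg w :=
    lt_of_le_of_ne (arg_nonneg_iff.2 him.le) fun h => him.ne' (arg_eq_zero_iff.1 h.symm).2
  have harg1 : arg w < π / 2 := arg_lt_pi_div_two_iff.2 (Or.inl hre)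
  rw [← ofReal_neg, cpow_ofReal_im]
  exact mul_neg_of_pos_of_neg (rpow_pos_of_pos (norm_pos_iff.2 hw) _)
    (sin_neg_of_neg_of_neg_pi_lt (by nlinarith) (by nlinarith))

theorem Complex.im_cpow_neg_ofReal_pos {p : ℝ} (hp0 : 0 < p) (hp2 : p < 2) {w : ℂ}
    (hre : 0 < w.re) (him : w.im < 0) : 0 < (w ^ (-(p : ℂ))).im := by
  have hw : w ≠ 0 := fun h => by simp [h] at him
  have harg0 : arg w < 0 := arg_neg_iff.2 him
  have harg1 : -(π / 2) < arg w := neg_pi_div_two_lt_arg_iff.2 (Or.inl hre)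
  rw [← ofReal_neg, cpow_ofReal_im]
  exact mul_pos (rpow_pos_of_pos (norm_pos_iff.2 hw) _)
    (sin_pos_of_pos_of_lt_pi (by nlinarith) (by nlinarith))

theorem summable_norm_cpow_neg_of_linear_le_re {p : ℝ} (hp : 1 < p) {c : ℝ} (hc : 0 < c)
    {w : ℕ → ℂ} (hw : ∀ k : ℕ, c * (k + 1) ≤ (w k).re) :
    Summable fun k => ‖w k ^ (-(p : ℂ))‖ := by
  have hmajorant : Summable fun k : ℕ => c ^ (-p) * ((k : ℝ) + 1) ^ (-p) := by
    refine Summable.mul_left _ ?_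
    exact_mod_cast (summable_nat_add_iff 1).2 (summable_nat_rpow.2 (by linarith : -p < -1))
  refine hmajorant.of_nonneg_of_le (fun _ => norm_nonneg _) fun k => ?_
  calc ‖w k ^ (-(p : ℂ))‖ = ‖w k‖ ^ (-p) := by rw [← ofReal_neg, norm_cpow_real]
    _ ≤ (c * (k + 1)) ^ (-p) :=
      rpow_le_rpow_of_nonpos (by positivity) ((hw k).trans (re_le_norm _)) (by linarith)
    _ = c ^ (-p) * ((k : ℝ) + 1) ^ (-p) := mul_rpow hc.le (by positivity)

theorem Complex.im_tsum_neg {ι : Type*} [Nonempty ι] {f : ι → ℂ} (hf : Summable f)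
    (h : ∀ i, (f i).im < 0) : (∑' i, f i).im < 0 := by
  have hf_im : Summable fun i => (f i).im := (hf.mapL imCLM :)
  rw [im_tsum hf]
  simpa using hf_im.tsum_lt_tsum (fun i => (h i).le) (h (Classical.arbitrary ι)) summable_zero

open Real in
/-- For 1 < p < 2 and z in the half-strip {0 < Re z < π/2, Im z > 0}, the series
Σ [(kπ+z)^(−p) − (kπ+π−z)^(−p)] converges absolutely and its sum has negative
imaginary part. -/
theorem acp_series (p : ℝ) (hp1 : 1 < p) (hp2 : p < 2) (z : ℂ)
    (hre0 : 0 < z.re) (hre : z.re < π / 2) (him : 0 < z.im) :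
    Summable (fun k : ℕ =>
        ‖((k : ℂ) * π + z) ^ (-(p : ℂ)) - ((k : ℂ) * π + π - z) ^ (-(p : ℂ))‖) ∧
      (∑' k : ℕ,
        (((k : ℂ) * π + z) ^ (-(p : ℂ)) - ((k : ℂ) * π + π - z) ^ (-(p : ℂ)))).im < 0 := by
  have hk : ∀ k : ℕ, (0 : ℝ) ≤ k := fun k => k.cast_nonneg
  have hre_left : ∀ k : ℕ, z.re * (k + 1) ≤ ((k : ℂ) * π + z).re := fun k => by
    simp only [add_re, mul_re, natCast_re, natCast_im, ofReal_re, ofReal_im]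
    nlinarith [hk k]
  have hre_right : ∀ k : ℕ, (π - z.re) * (k + 1) ≤ ((k : ℂ) * π + π - z).re := fun k => by
    simp only [sub_re, add_re, mul_re, natCast_re, natCast_im, ofReal_re, ofReal_im]
    nlinarith [hk k]
  have hpos : 0 < π - z.re := by linarith [pi_pos]
  have hsum := ((summable_norm_cpow_neg_of_linear_le_re hp1 hre0 hre_left).add
    (summable_norm_cpow_neg_of_linear_le_re hp1 hpos hre_right)).of_nonneg_of_le
      (fun _ => norm_nonneg _) fun k => norm_sub_le _ _
  refine ⟨hsum, ?_⟩
  have hterm : ∀ k : ℕ,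
      (((k : ℂ) * π + z) ^ (-(p : ℂ)) - ((k : ℂ) * π + π - z) ^ (-(p : ℂ))).im < 0 := fun k => by
    have hleft := im_cpow_neg_ofReal_neg (by linarith) hp2
      ((by positivity : 0 < z.re * (k + 1)).trans_le (hre_left k)) (by simpa using him)
    have hright := im_cpow_neg_ofReal_pos (by linarith) hp2
      ((by positivity : 0 < (π - z.re) * (k + 1)).trans_le (hre_right k)) (by simpa using him)
    rw [sub_im]
    linarith
  exact im_tsum_neg hsum.of_norm hterm
end
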